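/- arXiv:1202.4555 — 3 statements merged into one kernel-verified Lean document; each statement's English description precedes it below -/
import Mathlib

section
/- Let S be a constant skew-symmetric k×k real matrix, let H, C : ℝ^k → ℝ be continuously differentiable with S ∇C(u) = 0 for all u ∈ ℝ^k (i.e. C is a Casimir). Let Δt > 0 and suppose u₀, u₁ ∈ ℝ^k satisfy the average vector field relation (u₁ - u₀)/Δt = ∫₀¹ S ∇H((1-ξ)u₀ + ξu₁) dξ. Then C(u₁) = C(u₀). -/
/-!
Skew-symmetry of `S` together with `S ∇C(x) = 0` makes `∇C(x)` orthogonal to the range of `S`,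
for every `x`. The AVF increment `u₁ - u₀` is `Δt` times an integral of vectors in that range, so it
is orthogonal to every `∇C(x)`; hence `C` is constant along the segment from `u₀` to `u₁`.
-/

open Matrix

lemma Matrix.dotProduct_mulVec_eq_zero_of_transpose_eq_neg {n R : Type*} [Fintype n] [CommRing R]
    {S : Matrix n n R} (hS : Sᵀ = -S) {c : n → R} (hc : S *ᵥ c = 0) (w : n → R) :
    c ⬝ᵥ S *ᵥ w = 0 := by
  rw [dotProduct_mulVec, ← mulVec_transpose, hS, neg_mulVec, hc, neg_zero, zero_dotProduct]

lemma ContinuousLinearMap.map_intervalIntegral_eq_zero {E F : Type*} [NormedAddCommGroup E]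
    [NormedSpace ℝ E] [CompleteSpace E] [NormedAddCommGroup F] [NormedSpace ℝ F]
    [CompleteSpace F] (L : E →L[ℝ] F) {f : ℝ → E} (hf : ∀ ξ, L (f ξ) = 0) (a b : ℝ) :
    L (∫ ξ in a..b, f ξ) = 0 := by
  by_cases hint : IntervalIntegrable f MeasureTheory.volume a b
  · simp only [← L.intervalIntegral_comp_comm hint, hf, intervalIntegral.integral_zero]
  · rw [intervalIntegral.integral_undef hint, map_zero]

lemma Differentiable.apply_add_eq_of_fderiv_apply_eq_zero {E : Type*} [NormedAddCommGroup E]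
    [NormedSpace ℝ E] {f : E → ℝ} (hf : Differentiable ℝ f) {v : E}
    (hv : ∀ x, fderiv ℝ f x v = 0) (u : E) : f (u + v) = f u := by
  have hline : ∀ t : ℝ, HasDerivAt (fun t : ℝ => f (u + t • v)) 0 t := fun t => by
    have h := (hf (u + t • v)).hasFDerivAt.comp_hasDerivAt t
      (((hasDerivAt_id t).smul_const v).const_add u)
    rwa [one_smul, hv] at h
  simpa using is_const_of_deriv_eq_zero (fun t => (hline t).differentiableAt)
    (fun t => (hline t).deriv) 1 0

theorem avf_preserves_casimirs_general {k : ℕ}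
    (S : Matrix (Fin k) (Fin k) ℝ) (hS : Sᵀ = -S)
    (H C : EuclideanSpace ℝ (Fin k) → ℝ) (hC : ContDiff ℝ 1 C)
    (hCas : ∀ u : EuclideanSpace ℝ (Fin k),
      S.mulVec ((gradient C u : EuclideanSpace ℝ (Fin k))) = 0)
    (Δt : ℝ) (hΔt : 0 < Δt) (u₀ u₁ : EuclideanSpace ℝ (Fin k))
    (havf : Δt⁻¹ • (u₁ - u₀) = ∫ ξ in (0:ℝ)..1,
      ((WithLp.toLp 2 (S.mulVec ((gradient H ((1 - ξ) • u₀ + ξ • u₁) : EuclideanSpace ℝ (Fin k)))) :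
        EuclideanSpace ℝ (Fin k)))) :
    C u₁ = C u₀ := by
  have hrange_perp : ∀ x (w : Fin k → ℝ), inner ℝ (gradient C x) (WithLp.toLp 2 (S *ᵥ w)) = 0 :=
    fun x w => by
      rw [EuclideanSpace.inner_toLp_toLp, dotProduct_comm, star_trivial]
      exact dotProduct_mulVec_eq_zero_of_transpose_eq_neg hS (hCas x) w
  have hstep_perp : ∀ x, fderiv ℝ C x (u₁ - u₀) = 0 := fun x => by
    have hinc := (innerSL ℝ (gradient C x)).map_intervalIntegral_eq_zero
      (f := fun ξ => WithLp.toLp 2 (S *ᵥ (gradient H ((1 - ξ) • u₀ + ξ • u₁)).ofLp))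
      (fun ξ => hrange_perp x _) 0 1
    rw [← havf, map_smul, smul_eq_zero, innerSL_apply_apply, inner_gradient_left] at hinc
    exact hinc.resolve_left (inv_ne_zero hΔt.ne')
  simpa using (hC.differentiable one_ne_zero).apply_add_eq_of_fderiv_apply_eq_zero hstep_perp u₀

/-- The AVF method preserves Casimirs: if `S ∇C(u) = 0` for all `u`, then a step
of the average vector field method for `u' = S ∇H(u)` conserves `C`. -/
theorem avf_preserves_casimirs {k : ℕ}
    (S : Matrix (Fin k) (Fin k) ℝ) (hS : Sᵀ = -S)
    (H C : EuclideanSpace ℝ (Fin k) → ℝ) (hH : ContDiff ℝ 1 H) (hC : ContDiff ℝ 1 C)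
    (hCas : ∀ u : EuclideanSpace ℝ (Fin k),
      S.mulVec ((gradient C u : EuclideanSpace ℝ (Fin k))) = 0)
    (Δt : ℝ) (hΔt : 0 < Δt) (u₀ u₁ : EuclideanSpace ℝ (Fin k))
    (havf : Δt⁻¹ • (u₁ - u₀) = ∫ ξ in (0:ℝ)..1,
      ((WithLp.toLp 2 (S.mulVec ((gradient H ((1 - ξ) • u₀ + ξ • u₁) : EuclideanSpace ℝ (Fin k)))) :
        EuclideanSpace ℝ (Fin k)))) :
    C u₁ = C u₀ :=
  avf_preserves_casimirs_general S hS H C hC hCas Δt hΔt u₀ u₁ havf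
end

section
/- Let H : ℝ^k → ℝ be continuously differentiable, let S be a constant skew-symmetric k×k real matrix, let Δt > 0, and suppose u₀, u₁ ∈ ℝ^k satisfy the average vector field relation (u₁ - u₀)/Δt = ∫₀¹ S ∇H((1-ξ)u₀ + ξu₁) dξ. Then the energy is preserved exactly: H(u₁) = H(u₀). -/
/-!
Along the segment `γ ξ = (1 - ξ) u₀ + ξ u₁` the fundamental theorem of calculus gives
`H u₁ - H u₀ = ⟪ḡ, u₁ - u₀⟫`, where `ḡ` is the average of `∇H` over the segment. The AVF relation
says exactly that `u₁ - u₀ = Δt • S ḡ`, and `⟪ḡ, S ḡ⟫ = 0` because `S` is skew-symmetric.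
-/

open Matrix intervalIntegral AffineMap
open scoped RealInnerProductSpace Gradient

theorem Matrix.dotProduct_mulVec_self_eq_zero_of_transpose_eq_neg {R n : Type*} [CommRing R]
    [IsAddTorsionFree R] [Fintype n] {S : Matrix n n R} (hS : Sᵀ = -S) (v : n → R) :
    v ⬝ᵥ S *ᵥ v = 0 := by
  refine self_eq_neg.mp ?_
  calc v ⬝ᵥ S *ᵥ v = Sᵀ *ᵥ v ⬝ᵥ v := by rw [mulVec_transpose, dotProduct_mulVec]
    _ = -(v ⬝ᵥ S *ᵥ v) := by rw [hS, neg_mulVec, neg_dotProduct, dotProduct_comm]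

section InnerProductSpace

variable {E : Type*} [NormedAddCommGroup E] [InnerProductSpace ℝ E] [CompleteSpace E]

theorem ContDiff.continuous_gradient {H : E → ℝ} (hH : ContDiff ℝ 1 H) : Continuous (∇ H) :=
  (InnerProductSpace.toDual ℝ E).symm.continuous.comp (hH.continuous_fderiv one_ne_zero)

theorem sub_eq_inner_integral_gradient_lineMap {H : E → ℝ} (hH : ContDiff ℝ 1 H) (u₀ u₁ : E) :
    H u₁ - H u₀ = ⟪∫ ξ in (0 : ℝ)..1, ∇ H (lineMap u₀ u₁ ξ), u₁ - u₀⟫ := by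
  have hderiv (ξ : ℝ) :
      HasDerivAt (H ∘ lineMap u₀ u₁) ⟪∇ H (lineMap u₀ u₁ ξ), u₁ - u₀⟫ ξ := by
    rw [inner_gradient_left]
    exact (hH.differentiable one_ne_zero _).hasFDerivAt.comp_hasDerivAt ξ hasDerivAt_lineMap
  have hgrad : Continuous fun ξ : ℝ ↦ ∇ H (lineMap u₀ u₁ ξ) :=
    hH.continuous_gradient.comp lineMap_continuous
  calc H u₁ - H u₀ = ∫ ξ in (0 : ℝ)..1, ⟪∇ H (lineMap u₀ u₁ ξ), u₁ - u₀⟫ := by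
        rw [integral_eq_sub_of_hasDerivAt (fun ξ _ ↦ hderiv ξ)
          ((hgrad.inner continuous_const).intervalIntegrable 0 1)]
        simp
    _ = ∫ ξ in (0 : ℝ)..1, innerSL ℝ (u₁ - u₀) (∇ H (lineMap u₀ u₁ ξ)) := by
        simp only [innerSL_apply_apply, real_inner_comm]
    _ = ⟪∫ ξ in (0 : ℝ)..1, ∇ H (lineMap u₀ u₁ ξ), u₁ - u₀⟫ := by
        rw [(innerSL ℝ (u₁ - u₀)).intervalIntegral_comp_comm (hgrad.intervalIntegrable 0 1),
          innerSL_apply_apply, real_inner_comm]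

theorem eq_of_avf_step_of_inner_self_eq_zero {H : E → ℝ} (hH : ContDiff ℝ 1 H) {T : E →L[ℝ] E}
    (hT : ∀ x, ⟪x, T x⟫ = 0) {Δt : ℝ} (hΔt : Δt ≠ 0) {u₀ u₁ : E}
    (havf : Δt⁻¹ • (u₁ - u₀) = ∫ ξ in (0 : ℝ)..1, T (∇ H (lineMap u₀ u₁ ξ))) :
    H u₁ = H u₀ := by
  set g := ∫ ξ in (0 : ℝ)..1, ∇ H (lineMap u₀ u₁ ξ)
  have hstep : u₁ - u₀ = Δt • T g := by
    rw [← T.intervalIntegral_comp_comm, ← havf, smul_inv_smul₀ hΔt]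
    exact (hH.continuous_gradient.comp lineMap_continuous).intervalIntegrable 0 1
  rw [← sub_eq_zero, sub_eq_inner_integral_gradient_lineMap hH, hstep, real_inner_smul_right,
    hT, mul_zero]

end InnerProductSpace

/-- Exact energy preservation by the average vector field (AVF) method applied to
the skew-gradient system `u' = S ∇H(u)` with constant skew-symmetric `S`. -/
theorem avf_energy_preservation {k : ℕ}
    (H : EuclideanSpace ℝ (Fin k) → ℝ) (hH : ContDiff ℝ 1 H)
    (S : Matrix (Fin k) (Fin k) ℝ) (hS : Sᵀ = -S)
    (Δt : ℝ) (hΔt : 0 < Δt) (u₀ u₁ : EuclideanSpace ℝ (Fin k))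
    (havf : Δt⁻¹ • (u₁ - u₀) = ∫ ξ in (0:ℝ)..1,
      ((WithLp.toLp 2 (S.mulVec ((gradient H ((1 - ξ) • u₀ + ξ • u₁) : EuclideanSpace ℝ (Fin k)))) :
        EuclideanSpace ℝ (Fin k)))) :
    H u₁ = H u₀ := by
  refine eq_of_avf_step_of_inner_self_eq_zero hH (T := toEuclideanCLM (𝕜 := ℝ) S)
    (fun x ↦ ?_) hΔt.ne' ?_
  · rw [inner_toEuclideanCLM, dotProduct_mulVec_self_eq_zero_of_transpose_eq_neg hS]
  · simp only [lineMap_apply_module]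
    exact havf
end

section
/- Let f : ℝ^k → ℝ^k be continuous, T an invertible k×k real matrix, and define g : ℝ^k → ℝ^k by g(v) = T f(T⁻¹ v). Let Δt > 0 and suppose u₀, u₁ ∈ ℝ^k satisfy the AVF relation (u₁ - u₀)/Δt = ∫₀¹ f((1-ξ)u₀ + ξu₁) dξ. Then T u₀ and T u₁ satisfy the AVF relation for g: (T u₁ - T u₀)/Δt = ∫₀¹ g((1-ξ)T u₀ + ξ T u₁) dξ. That is, the AVF method is covariant under linear changes of variables. -/
open Matrix

/-- Linear covariance of the AVF method: if `u₀, u₁` satisfy the AVF relation for `f`,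
then `T u₀, T u₁` satisfy the AVF relation for the transformed field
`g(v) = T f(T⁻¹ v)`. -/
theorem avf_linear_covariance {k : ℕ}
    (f : (Fin k → ℝ) → (Fin k → ℝ)) (hf : Continuous f)
    (T : Matrix (Fin k) (Fin k) ℝ) (hT : IsUnit T)
    (g : (Fin k → ℝ) → (Fin k → ℝ))
    (hg : ∀ v, g v = T.mulVec (f (T⁻¹.mulVec v)))
    (Δt : ℝ) (hΔt : 0 < Δt) (u₀ u₁ : Fin k → ℝ)
    (havf : Δt⁻¹ • (u₁ - u₀) = ∫ ξ in (0:ℝ)..1, f ((1 - ξ) • u₀ + ξ • u₁)) :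
    Δt⁻¹ • (T.mulVec u₁ - T.mulVec u₀) =
      ∫ ξ in (0:ℝ)..1, g ((1 - ξ) • T.mulVec u₀ + ξ • T.mulVec u₁) := by
  have hTinv : T⁻¹ * T = 1 := nonsing_inv_mul T (isUnit_iff_isUnit_det T |>.mp hT)
  have hkey : ∀ ξ : ℝ, g ((1 - ξ) • T.mulVec u₀ + ξ • T.mulVec u₁)
      = T.mulVec (f ((1 - ξ) • u₀ + ξ • u₁)) := by
    intro ξ
    rw [hg]
    congr 2
    rw [mulVec_add, mulVec_smul, mulVec_smul, mulVec_mulVec, mulVec_mulVec, hTinv,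
      one_mulVec, one_mulVec]
  simp_rw [hkey]
  set L := Matrix.mulVecLin T |>.toContinuousLinearMap with hL
  have hLT : ∀ v, L v = T.mulVec v := fun v => rfl
  have hint : IntervalIntegrable (fun ξ : ℝ => f ((1 - ξ) • u₀ + ξ • u₁))
      MeasureTheory.volume 0 1 := by
    apply Continuous.intervalIntegrable
    exact hf.comp (by continuity)
  calc Δt⁻¹ • (T.mulVec u₁ - T.mulVec u₀)
      = T.mulVec (Δt⁻¹ • (u₁ - u₀)) := by
        rw [mulVec_smul, mulVec_sub]
    _ = L (∫ ξ in (0:ℝ)..1, f ((1 - ξ) • u₀ + ξ • u₁)) := by rw [havf]; rfl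
    _ = ∫ ξ in (0:ℝ)..1, T.mulVec (f ((1 - ξ) • u₀ + ξ • u₁)) := by
        rw [← ContinuousLinearMap.intervalIntegral_comp_comm L hint]; rfl
end
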